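/- arXiv:2010.01366 — 2 statements merged into one kernel-verified Lean document; each statement's English description precedes it below -/
import Mathlib

section
/- Let p ≥ 2 and n ≥ 1 be integers. Let r : Fin p → Fin p → ZMod p be given by r i j = (-1)^(j : ℕ) * (Nat.choose (i : ℕ) (j : ℕ)), and for F : (Fin n → Fin p) → ZMod p define RMF(F)(x) = Σ_{y : Fin n → Fin p} (∏_{i : Fin n} r (x i) (y i)) * F y. Then the n-variable RMF transform is an involution: for every F and every x, RMF(RMF(F))(x) = F(x). -/
open Finset

/-- Entry of the basic Reed–Muller–Fourier matrix over ℤ/pℤ. -/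
def rmfEntry (p : ℕ) (i j : Fin p) : ZMod p :=
  (-1) ^ (j : ℕ) * (Nat.choose (i : ℕ) (j : ℕ) : ZMod p)

/-- n-variable Reed–Muller–Fourier transform (n-fold Kronecker power). -/
def RMF (p n : ℕ) (F : (Fin n → Fin p) → ZMod p) (x : Fin n → Fin p) : ZMod p :=
  ∑ y : Fin n → Fin p, (∏ i : Fin n, rmfEntry p (x i) (y i)) * F y

lemma key_int (p i k : ℕ) (hi : i < p) :
    ∑ j ∈ Finset.range p, (-1 : ℤ) ^ j * (i.choose j) * (j.choose k)
      = (-1) ^ k * (if i = k then 1 else 0) := by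
  rw [← Finset.sum_subset (Finset.range_subset_range.2 hi)
      (fun j _ hj => by
        have : i < j := Nat.lt_of_succ_le (Nat.not_lt.1 (Finset.mem_range.not.1 hj))
        simp [Nat.choose_eq_zero_of_lt this])]
  by_cases hk : k ≤ i
  · rw [← Finset.sum_subset (s₁ := Finset.Ico k (i+1))
        (Finset.Ico_subset_Ico (Nat.zero_le _) le_rfl |>.trans (by simp))
        (fun j hj hj2 => by
          have : j < k := by
            rcases Nat.lt_or_ge j k with h | h
            · exact h
            · exact absurd (Finset.mem_Ico.2 ⟨h, Finset.mem_range.1 hj⟩) hj2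
          simp [Nat.choose_eq_zero_of_lt this])]
    rw [Finset.sum_Ico_eq_sum_range]
    have hik : i + 1 - k = (i - k) + 1 := by omega
    rw [hik]
    have hterm : ∀ m ∈ Finset.range ((i - k) + 1),
        (-1 : ℤ) ^ (k + m) * (i.choose (k + m)) * ((k + m).choose k)
          = ((-1) ^ k * (i.choose k)) * ((-1) ^ m * ((i - k).choose m)) := by
      intro m hm
      have hm' : k + m ≤ i := by
        have := Finset.mem_range.1 hm; omega
      have := Nat.choose_mul (n := i) (Nat.le_add_right k m)
      have h2 : (k + m) - k = m := by omega
      rw [h2] at this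
      have hc : ((i.choose (k+m)) : ℤ) * ((k+m).choose k)
          = (i.choose k) * ((i-k).choose m) := by exact_mod_cast congrArg (Nat.cast : ℕ → ℤ) this
      push_cast [pow_add]
      linear_combination ((-1:ℤ)^k * (-1)^m) * hc
    rw [Finset.sum_congr rfl hterm, ← Finset.mul_sum, Int.alternating_sum_range_choose]
    rcases eq_or_ne i k with h | h
    · simp [h]
    · have : i - k ≠ 0 := by omega
      simp [h, this]
  · have h0 : ∀ j ∈ Finset.range (i+1), (-1 : ℤ) ^ j * (i.choose j) * (j.choose k) = 0 := by
      intro j hj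
      have : j < k := by have := Finset.mem_range.1 hj; omega
      simp [Nat.choose_eq_zero_of_lt this]
    rw [Finset.sum_eq_zero h0]
    have : i ≠ k := by omega
    simp [this]


lemma key_zmod (p : ℕ) (i k : Fin p) :
    ∑ j : Fin p, rmfEntry p i j * rmfEntry p j k = if i = k then 1 else 0 := by
  have h := congrArg (Int.cast : ℤ → ZMod p) (key_int p i k i.isLt)
  push_cast at h
  have hf : ∀ j : Fin p, rmfEntry p i j * rmfEntry p j k
      = (fun j : ℕ => ((-1 : ZMod p) ^ (k : ℕ)) *
          ((-1) ^ j * ((i : ℕ).choose j : ZMod p) * ((j.choose (k : ℕ) : ℕ) : ZMod p))) (j : ℕ) := by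
    intro j; simp only [rmfEntry]; ring
  rw [Finset.sum_congr rfl (fun j _ => hf j),
    Fin.sum_univ_eq_sum_range (fun j : ℕ => (-1 : ZMod p) ^ (k : ℕ) *
      ((-1) ^ j * ((i : ℕ).choose j : ZMod p) * ((j.choose (k : ℕ) : ℕ) : ZMod p))),
    ← Finset.mul_sum, h]
  rcases eq_or_ne i k with he | he
  · simp [he, ← mul_pow]
  · have h2 : (i : ℕ) ≠ (k : ℕ) := fun hh => he (Fin.ext hh)
    simp [he, h2]


/-- The n-variable RMF transform is an involution. -/
theorem rmf_involutive (p n : ℕ) (hp : 2 ≤ p) (hn : 1 ≤ n)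
    (F : (Fin n → Fin p) → ZMod p) :
    ∀ x : Fin n → Fin p, RMF p n (RMF p n F) x = F x := by
  intro x
  unfold RMF
  calc (∑ y : Fin n → Fin p, (∏ i, rmfEntry p (x i) (y i)) *
          ∑ z : Fin n → Fin p, (∏ i, rmfEntry p (y i) (z i)) * F z)
      = ∑ z : Fin n → Fin p, (∑ y : Fin n → Fin p,
          ∏ i, rmfEntry p (x i) (y i) * rmfEntry p (y i) (z i)) * F z := by
        simp_rw [Finset.mul_sum]
        rw [Finset.sum_comm]
        refine Finset.sum_congr rfl fun z _ => ?_
        simp_rw [← mul_assoc, ← Finset.prod_mul_distrib]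
        rw [← Finset.sum_mul]
    _ = ∑ z : Fin n → Fin p, (∏ i, ∑ j : Fin p,
          rmfEntry p (x i) j * rmfEntry p j (z i)) * F z := by
        congr 1; ext z; congr 1
        rw [Finset.prod_univ_sum, Fintype.piFinset_univ]
    _ = F x := by
        simp only [key_zmod]
        rw [Finset.sum_eq_single x]
        · simp
        · intro z _ hz
          have : ∃ i, x i ≠ z i := by
            by_contra h; push_neg at h; exact hz (funext fun i => (h i).symm)
          obtain ⟨i, hi⟩ := this
          rw [Finset.prod_eq_zero (Finset.mem_univ i) (by simp [hi]), zero_mul]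
        · intro h; exact absurd (Finset.mem_univ x) h
end

section
/- Let p ≥ 2 and n ≥ 1 be integers. Let r : Fin p → Fin p → ZMod p be given by r i j = (-1)^(j : ℕ) * (Nat.choose (i : ℕ) (j : ℕ)), and for F : (Fin n → Fin p) → ZMod p define RMF(F)(x) = Σ_{y : Fin n → Fin p} (∏_{i : Fin n} r (x i) (y i)) * F y. Let ρ : Fin n → Fin n be the cyclic shift ρ(i) = i + 1, and say x ~ y iff y = x ∘ ρ^m for some m ∈ ℕ. Let R ⊆ (Fin n → Fin p) be a finite set containing exactly one element of each ~-orbit. Let F : (Fin n → Fin p) → ZMod p be rotation symmetric, i.e. F(x ∘ ρ) = F(x) for all x. Then for every w : Fin n → Fin p, F(w) = Σ_{v ∈ R} RMF(F)(v) * RMF(φ_v)(w), where φ_v(y) = 1 if y ~ v and φ_v(y) = 0 otherwise. -/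
/-- The cyclic shift of the indices. -/
def rho (n : ℕ) [NeZero n] (i : Fin n) : Fin n := i + 1

/-- The cyclic-shift orbit relation: `x ~ y` iff `y = x ∘ ρ^[m]` for some `m`. -/
def orbRel (p n : ℕ) [NeZero n] (x y : Fin n → Fin p) : Prop :=
  ∃ m : ℕ, y = x ∘ (rho n)^[m]

open Classical in
/-- The elementary rotation symmetric function attached to `v`:
the indicator of the cyclic-shift orbit of `v`. -/
noncomputable def phi (p n : ℕ) [NeZero n] (v y : Fin n → Fin p) : ZMod p :=
  if orbRel p n y v then 1 else 0

/-!
The RMF transform is multiplication by the `n`-th Kronecker power of the basic RMF matrix,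
which is an involution since the basic matrix is (binomial inversion). Kronecker powers commute
with permuting the coordinates, so the spectrum of a rotation symmetric `F` is again rotation
symmetric, hence equal to the combination `∑ v ∈ R, RMF F v • φ_v` of orbit indicators.
Applying the (linear, involutive) transform to this combination gives back `F`.
-/

open Finset

theorem sum_range_neg_one_pow_mul_choose_mul_choose {a b N : ℕ} (ha : a < N) :
    ∑ k ∈ range N, (-1 : ℤ) ^ k * a.choose k * k.choose b = if a = b then (-1) ^ a else 0 := by
  have hvanish : ∀ k, a < k → (-1 : ℤ) ^ k * a.choose k * k.choose b = 0 := fun k hk => by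
    simp [Nat.choose_eq_zero_of_lt hk]
  obtain ⟨N, rfl⟩ := Nat.exists_eq_add_of_le ha
  rw [sum_range_add, sum_eq_zero (s := range N) fun k _ => hvanish _ (by omega), add_zero]
  rcases lt_or_ge a b with hab | hba
  · rw [if_neg hab.ne]
    refine sum_eq_zero fun k hk => ?_
    simp [Nat.choose_eq_zero_of_lt (lt_of_le_of_lt (mem_range_succ_iff.mp hk) hab)]
  obtain ⟨d, rfl⟩ := Nat.exists_eq_add_of_le hba
  have hterm : ∀ j, (-1 : ℤ) ^ (b + j) * (b + d).choose (b + j) * (b + j).choose b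
      = (-1) ^ b * (b + d).choose b * ((-1) ^ j * d.choose j) := fun j => by
    have := Nat.choose_mul (n := b + d) (Nat.le_add_right b j)
    rw [Nat.add_sub_cancel_left, Nat.add_sub_cancel_left] at this
    rw [pow_add, mul_assoc, ← Nat.cast_mul, this]
    push_cast; ring
  have hlow : ∀ k ∈ range b, (-1 : ℤ) ^ k * (b + d).choose k * k.choose b = 0 := fun k hk => by
    simp [Nat.choose_eq_zero_of_lt (mem_range.mp hk)]
  rw [show (b + d).succ = b + (d + 1) by omega, sum_range_add, sum_eq_zero hlow, zero_add,
    sum_congr rfl fun j _ => hterm j, ← mul_sum, Int.alternating_sum_range_choose]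
  rcases eq_or_ne d 0 with rfl | hd
  · simp
  · simp [hd]

namespace Matrix

variable {α β γ R : Type*} [CommSemiring R] (ι : Type*) [Fintype ι]

def kroneckerPow (A : Matrix α β R) : Matrix (ι → α) (ι → β) R :=
  of fun x y => ∏ i, A (x i) (y i)

variable {ι}

theorem kroneckerPow_mul [DecidableEq ι] [Fintype β] (A : Matrix α β R) (B : Matrix β γ R) :
    kroneckerPow ι (A * B) = kroneckerPow ι A * kroneckerPow ι B := by
  ext x z
  simp only [kroneckerPow, mul_apply, of_apply, Fintype.prod_sum, prod_mul_distrib]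

theorem kroneckerPow_one [DecidableEq α] :
    kroneckerPow ι (1 : Matrix α α R) = 1 := by
  ext x y
  simp only [kroneckerPow, of_apply, one_apply, Fintype.prod_boole, funext_iff]

theorem kroneckerPow_apply_comp_perm (A : Matrix α β R) (σ : Equiv.Perm ι) (x : ι → α)
    (y : ι → β) : kroneckerPow ι A (x ∘ σ) (y ∘ σ) = kroneckerPow ι A x y :=
  Equiv.prod_comp σ fun i => A (x i) (y i)

end Matrix

open Matrix

def rmfMatrix (p : ℕ) : Matrix (Fin p) (Fin p) (ZMod p) :=
  of (rmfEntry p)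

theorem rmfMatrix_mul_self (p : ℕ) : rmfMatrix p * rmfMatrix p = 1 := by
  ext a b
  have hsum := congrArg (Int.cast : ℤ → ZMod p)
    (sum_range_neg_one_pow_mul_choose_mul_choose (b := b) a.isLt)
  rw [← Fin.sum_univ_eq_sum_range (fun k => (-1 : ℤ) ^ k * (a : ℕ).choose k * k.choose b)] at hsum
  push_cast at hsum
  simp only [Fin.val_inj] at hsum
  calc (rmfMatrix p * rmfMatrix p) a b
      = (-1) ^ (b : ℕ) *
          ∑ k : Fin p, (-1) ^ (k : ℕ) * ((a : ℕ).choose k : ZMod p) * (k : ℕ).choose b := by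
        simp only [rmfMatrix, mul_apply, of_apply, rmfEntry, mul_sum]
        exact sum_congr rfl fun k _ => by ring
    _ = (1 : Matrix (Fin p) (Fin p) (ZMod p)) a b := by
        rw [hsum, one_apply]
        split_ifs with h
        · rw [h, ← mul_pow, neg_one_mul, neg_neg, one_pow]
        · exact mul_zero _

theorem RMF_eq_mulVec (p n : ℕ) (F : (Fin n → Fin p) → ZMod p) :
    RMF p n F = kroneckerPow (Fin n) (rmfMatrix p) *ᵥ F := by
  ext x
  simp only [RMF, mulVec, dotProduct, kroneckerPow, rmfMatrix, of_apply]

theorem RMF_RMF (p n : ℕ) (F : (Fin n → Fin p) → ZMod p) : RMF p n (RMF p n F) = F := by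
  rw [RMF_eq_mulVec, RMF_eq_mulVec, mulVec_mulVec, ← kroneckerPow_mul, rmfMatrix_mul_self,
    kroneckerPow_one, one_mulVec]

theorem RMF_sum_mul {κ : Type*} (p n : ℕ) (s : Finset κ) (c : κ → ZMod p)
    (G : κ → (Fin n → Fin p) → ZMod p) (x : Fin n → Fin p) :
    RMF p n (fun y => ∑ v ∈ s, c v * G v y) x = ∑ v ∈ s, c v * RMF p n (G v) x := by
  simp only [RMF, mul_sum]
  rw [sum_comm]
  exact sum_congr rfl fun v _ => sum_congr rfl fun y _ => by ring

theorem RMF_comp_perm (p n : ℕ) (σ : Equiv.Perm (Fin n)) (F : (Fin n → Fin p) → ZMod p)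
    (hF : ∀ x, F (x ∘ σ) = F x) (x : Fin n → Fin p) : RMF p n F (x ∘ σ) = RMF p n F x := by
  rw [RMF_eq_mulVec]
  simp only [mulVec, dotProduct]
  rw [← (Equiv.arrowCongr σ.symm (Equiv.refl (Fin p))).sum_comp]
  refine sum_congr rfl fun y _ => ?_
  change kroneckerPow _ _ (x ∘ σ) (y ∘ σ) * F (y ∘ σ) = _
  rw [kroneckerPow_apply_comp_perm, hF]

theorem apply_comp_iterate_of_apply_comp {ι α β : Type*} (f : ι → ι) (G : (ι → α) → β)
    (hG : ∀ x, G (x ∘ f) = G x) (m : ℕ) (x : ι → α) : G (x ∘ f^[m]) = G x := by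
  induction m with
  | zero => rfl
  | succ m ih => rw [Function.iterate_succ]; exact (hG _).trans ih

theorem sum_mul_phi_of_orbRel_invariant (p n : ℕ) [NeZero n] (R : Finset (Fin n → Fin p))
    (hR : ∀ x : Fin n → Fin p, ∃! v, v ∈ R ∧ orbRel p n x v) (G : (Fin n → Fin p) → ZMod p)
    (hG : ∀ x y, orbRel p n x y → G y = G x) (y : Fin n → Fin p) :
    ∑ v ∈ R, G v * phi p n v y = G y := by
  obtain ⟨v₀, ⟨hv₀R, hv₀⟩, huniq⟩ := hR y
  rw [sum_eq_single_of_mem v₀ hv₀R, phi, if_pos hv₀, mul_one, hG y v₀ hv₀]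
  intro v hv hne
  rw [phi, if_neg fun h => hne (huniq v ⟨hv, h⟩), mul_zero]

theorem rmf_inverse_from_compact_general (p n : ℕ) [NeZero n]
    (R : Finset (Fin n → Fin p))
    (hR : ∀ x : Fin n → Fin p, ∃! v, v ∈ R ∧ orbRel p n x v)
    (F : (Fin n → Fin p) → ZMod p)
    (hF : ∀ x : Fin n → Fin p, F (x ∘ rho n) = F x) :
    ∀ w : Fin n → Fin p,
      F w = ∑ v ∈ R, RMF p n F v * RMF p n (phi p n v) w := by
  have hspec : ∀ x y, orbRel p n x y → RMF p n F y = RMF p n F x := by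
    rintro x _ ⟨m, rfl⟩
    exact apply_comp_iterate_of_apply_comp _ _ (RMF_comp_perm p n (Equiv.addRight 1) F hF) m x
  intro w
  calc F w = RMF p n (RMF p n F) w := by rw [RMF_RMF]
    _ = RMF p n (fun y => ∑ v ∈ R, RMF p n F v * phi p n v y) w := by
        simp only [sum_mul_phi_of_orbRel_invariant p n R hR _ hspec]
    _ = ∑ v ∈ R, RMF p n F v * RMF p n (phi p n v) w := by rw [RMF_sum_mul]

/-- A rotation symmetric function is recovered from its RMF spectrum as the
combination of the RMF spectra of the elementary rotation symmetric functions,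
weighted by the spectral values on the orbit representatives. -/
theorem rmf_inverse_from_compact (p n : ℕ) (hp : 2 ≤ p) [NeZero n]
    (R : Finset (Fin n → Fin p))
    (hR : ∀ x : Fin n → Fin p, ∃! v, v ∈ R ∧ orbRel p n x v)
    (F : (Fin n → Fin p) → ZMod p)
    (hF : ∀ x : Fin n → Fin p, F (x ∘ rho n) = F x) :
    ∀ w : Fin n → Fin p,
      F w = ∑ v ∈ R, RMF p n F v * RMF p n (phi p n v) w :=
  rmf_inverse_from_compact_general p n R hR F hF
end
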